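/- When σ = μ, the left-sided Riemann–Liouville derivative of order μ of the Jacobi poly-fractonomial of first kind gives a Legendre polynomial: D_{-1,ξ}^μ [(1+ξ)^μ P_{n-1}^{-μ,μ}(ξ)] = (Γ(n+μ)/Γ(n)) P_{n-1}(ξ), where P_{n-1} is the Legendre polynomial of degree n-1. -/

import Mathlib

open MeasureTheory Real Set Filter

/-- Generalized binomial coefficient `C(x, m)` for real `x`. -/
noncomputable def gbinom (x : ℝ) (m : ℕ) : ℝ :=
  (∏ i ∈ Finset.range m, (x - i)) / (Nat.factorial m)

/-- Jacobi polynomial `P_n^{a,b}(x)` (explicit hypergeometric-type sum). -/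
noncomputable def jacobiP (a b : ℝ) (n : ℕ) (x : ℝ) : ℝ :=
  ∑ s ∈ Finset.range (n + 1),
    gbinom ((n : ℝ) + a) (n - s) * gbinom ((n : ℝ) + b) s *
      ((x - 1) / 2) ^ s * ((x + 1) / 2) ^ (n - s)

/-- Left-sided Riemann–Liouville fractional integral of order `ν` with lower terminal `a`. -/
noncomputable def RLintL (a ν : ℝ) (u : ℝ → ℝ) (x : ℝ) : ℝ :=
  (1 / Real.Gamma ν) * ∫ s in a..x, u s * (x - s) ^ (ν - 1)

/-- Right-sided Riemann–Liouville fractional integral of order `ν` with upper terminal `b`. -/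
noncomputable def RLintR (b ν : ℝ) (u : ℝ → ℝ) (x : ℝ) : ℝ :=
  (1 / Real.Gamma ν) * ∫ s in x..b, u s * (s - x) ^ (ν - 1)

/-- Left-sided Riemann–Liouville fractional derivative of order `σ`. -/
noncomputable def RLderivL (a σ : ℝ) (u : ℝ → ℝ) (x : ℝ) : ℝ :=
  iteratedDeriv ⌈σ⌉₊ (RLintL a ((⌈σ⌉₊ : ℝ) - σ) u) x

/-- Right-sided Riemann–Liouville fractional derivative of order `σ`. -/
noncomputable def RLderivR (b σ : ℝ) (u : ℝ → ℝ) (x : ℝ) : ℝ :=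
  (-1 : ℝ) ^ ⌈σ⌉₊ * iteratedDeriv ⌈σ⌉₊ (RLintR b ((⌈σ⌉₊ : ℝ) - σ) u) x

/-- Left-sided Caputo fractional derivative of order `σ`. -/
noncomputable def CaputoL (a σ : ℝ) (u : ℝ → ℝ) (x : ℝ) : ℝ :=
  RLintL a ((⌈σ⌉₊ : ℝ) - σ) (iteratedDeriv ⌈σ⌉₊ u) x

/-! Expanding `P_{n-1}^{-μ,μ}` in powers of `(1+ξ)/2` writes the poly-fractonomial as a finite
sum of powers `(1+ξ)^(μ+k)`. The fractional integral of order `1-μ` of `(1+ξ)^p` is a Beta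
integral, `Γ(p+1)/Γ(p+2-μ) (1+ξ)^(p+1-μ)`, so `D^μ (1+ξ)^(μ+k) = Γ(μ+k+1)/k! (1+ξ)^k`. Since
`C(n-1+μ, n-1-k) Γ(μ+k+1) = Γ(n+μ)/(n-1-k)!`, the resulting coefficients are `Γ(n+μ)/Γ(n)` times
those of `P_{n-1}` in the same expansion. -/

open Finset

lemma inv_Gamma_eq_mul_inv_Gamma_add_one (q : ℝ) : (Gamma q)⁻¹ = q * (Gamma (q + 1))⁻¹ := by
  rcases eq_or_ne q 0 with rfl | hq
  · simp [Real.Gamma_zero]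
  · rw [Real.Gamma_add_one hq, mul_inv, ← mul_assoc, mul_inv_cancel₀ hq, one_mul]

lemma integral_rpow_mul_sub_rpow {p q c : ℝ} (hp : 0 < p) (hq : 0 < q) (hc : 0 < c) :
    ∫ y in (0 : ℝ)..c, y ^ (p - 1) * (c - y) ^ (q - 1) =
      Gamma p * Gamma q / Gamma (p + q) * c ^ (p + q - 1) := by
  apply Complex.ofReal_injective
  rw [← intervalIntegral.integral_ofReal]
  have hint : EqOn (fun y : ℝ => ((y ^ (p - 1) * (c - y) ^ (q - 1) : ℝ) : ℂ))
      (fun y : ℝ => (y : ℂ) ^ ((p : ℂ) - 1) * ((c : ℂ) - y) ^ ((q : ℂ) - 1)) (uIcc 0 c) := by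
    intro y hy
    rw [uIcc_of_le hc.le] at hy
    simp only [Complex.ofReal_mul]
    rw [Complex.ofReal_cpow hy.1, Complex.ofReal_cpow (sub_nonneg.2 hy.2)]
    push_cast
    rfl
  rw [intervalIntegral.integral_congr hint, Complex.betaIntegral_scaled _ _ hc,
    Complex.betaIntegral_eq_Gamma_mul_div _ _ (by simpa using hp) (by simpa using hq)]
  push_cast
  rw [Complex.ofReal_cpow hc.le, ← Complex.ofReal_add, ← Complex.Gamma_ofReal,
    ← Complex.Gamma_ofReal, ← Complex.Gamma_ofReal]
  push_cast
  ring

section RiemannLiouville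

variable {a x : ℝ}

lemma RLintL_congr {ν : ℝ} {u v : ℝ → ℝ} (hax : a ≤ x) (h : EqOn u v (Icc a x)) :
    RLintL a ν u x = RLintL a ν v x := by
  unfold RLintL
  congr 1
  refine intervalIntegral.integral_congr fun s hs => ?_
  rw [uIcc_of_le hax] at hs
  simp only [h hs]

lemma RLderivL_congr {σ : ℝ} {u v : ℝ → ℝ} (hax : a < x) (h : EqOn u v (Ici a)) :
    RLderivL a σ u x = RLderivL a σ v x := by
  have hI : RLintL a ((⌈σ⌉₊ : ℝ) - σ) u =ᶠ[nhds x] RLintL a ((⌈σ⌉₊ : ℝ) - σ) v := by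
    filter_upwards [Ioi_mem_nhds hax] with y hy
    exact RLintL_congr (le_of_lt hy) (h.mono Icc_subset_Ici_self)
  exact (hI.iteratedDeriv _).eq_of_nhds

lemma RLderivL_eq_deriv {μ : ℝ} (hμ0 : 0 < μ) (hμ1 : μ ≤ 1) (u : ℝ → ℝ) :
    RLderivL a μ u x = deriv (RLintL a (1 - μ) u) x := by
  have hceil : ⌈μ⌉₊ = 1 :=
    Nat.ceil_eq_iff one_ne_zero |>.2 ⟨by simpa using hμ0, by simpa using hμ1⟩
  rw [RLderivL, hceil, iteratedDeriv_one, Nat.cast_one]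

lemma RLintL_const_mul (ν c : ℝ) (u : ℝ → ℝ) :
    RLintL a ν (fun s => c * u s) x = c * RLintL a ν u x := by
  simp only [RLintL, mul_assoc, intervalIntegral.integral_const_mul]
  ring

lemma RLintL_sum {ι : Type*} {ν : ℝ} (s : Finset ι) (u : ι → ℝ → ℝ)
    (hu : ∀ i ∈ s, IntervalIntegrable (fun t => u i t * (x - t) ^ (ν - 1)) volume a x) :
    RLintL a ν (fun t => ∑ i ∈ s, u i t) x = ∑ i ∈ s, RLintL a ν (u i) x := by
  simp only [RLintL, sum_mul, intervalIntegral.integral_finsetSum hu, mul_sum]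

lemma intervalIntegrable_rpow_sub_mul_rpow_sub {p q : ℝ} (hp : -1 < p) (hq : -1 < q)
    (hax : a < x) :
    IntervalIntegrable (fun s => (s - a) ^ p * (x - s) ^ q) volume a x := by
  set c := (a + x) / 2 with hc
  have hac : a ≤ c := by linarith
  have hcx : c ≤ x := by linarith
  have hleft : IntervalIntegrable (fun s => (s - a) ^ p) volume a c := by
    simpa using
      (intervalIntegral.intervalIntegrable_rpow' hp (a := 0) (b := c - a)).comp_sub_right a
  have hright : IntervalIntegrable (fun s => (x - s) ^ q) volume c x := by
    simpa using
      ((intervalIntegral.intervalIntegrable_rpow' hq (a := 0) (b := x - c)).comp_sub_left x).symm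
  refine (hleft.mul_continuousOn ?_).trans (hright.continuousOn_mul ?_)
  · refine ContinuousOn.rpow_const (by fun_prop) fun s hs => Or.inl ?_
    rw [uIcc_of_le hac] at hs
    linarith [hs.2]
  · refine ContinuousOn.rpow_const (by fun_prop) fun s hs => Or.inl ?_
    rw [uIcc_of_le hcx] at hs
    linarith [hs.1]

lemma RLintL_rpow_sub {ν p : ℝ} (hν : 0 < ν) (hp : -1 < p) (hax : a < x) :
    RLintL a ν (fun s => (s - a) ^ p) x =
      Gamma (p + 1) / Gamma (p + ν + 1) * (x - a) ^ (p + ν) := by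
  have hshift : ∫ s in a..x, (s - a) ^ p * (x - s) ^ (ν - 1) =
      ∫ y in (0 : ℝ)..(x - a), y ^ (p + 1 - 1) * ((x - a) - y) ^ (ν - 1) := by
    simpa using intervalIntegral.integral_comp_sub_right
      (fun y => y ^ (p + 1 - 1) * ((x - a) - y) ^ (ν - 1)) a (a := a) (b := x)
  rw [RLintL, hshift, integral_rpow_mul_sub_rpow (by linarith) hν (sub_pos.2 hax),
    show p + 1 + ν - 1 = p + ν by ring, show p + 1 + ν = p + ν + 1 by ring]
  field_simp [(Real.Gamma_pos_of_pos hν).ne']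

lemma RLintL_sum_rpow_sub {ι : Type*} {ν : ℝ} (s : Finset ι) (c p : ι → ℝ) (hν : 0 < ν)
    (hp : ∀ i ∈ s, -1 < p i) (hax : a < x) :
    RLintL a ν (fun y => ∑ i ∈ s, c i * (y - a) ^ p i) x =
      ∑ i ∈ s, c i * (Gamma (p i + 1) / Gamma (p i + ν + 1)) * (x - a) ^ (p i + ν) := by
  rw [RLintL_sum]
  · refine sum_congr rfl fun i hi => ?_
    rw [RLintL_const_mul, RLintL_rpow_sub hν (hp i hi) hax, mul_assoc]
  · intro i hi
    simpa only [mul_assoc] using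
      (intervalIntegrable_rpow_sub_mul_rpow_sub (hp i hi) (by linarith) hax).const_mul (c i)

lemma RLderivL_sum_rpow_sub {ι : Type*} {μ : ℝ} (s : Finset ι) (c p : ι → ℝ) (hμ0 : 0 < μ)
    (hμ1 : μ < 1) (hp : ∀ i ∈ s, -1 < p i) (hax : a < x) :
    RLderivL a μ (fun y => ∑ i ∈ s, c i * (y - a) ^ p i) x =
      ∑ i ∈ s, c i * (Gamma (p i + 1) / Gamma (p i - μ + 1)) * (x - a) ^ (p i - μ) := by
  have hI : RLintL a (1 - μ) (fun y => ∑ i ∈ s, c i * (y - a) ^ p i) =ᶠ[nhds x]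
      fun y => ∑ i ∈ s, c i * (Gamma (p i + 1) / Gamma (p i + (1 - μ) + 1)) *
        (y - a) ^ (p i + (1 - μ)) := by
    filter_upwards [Ioi_mem_nhds hax] with y hy
    exact RLintL_sum_rpow_sub s c p (by linarith) hp hy
  rw [RLderivL_eq_deriv hμ0 hμ1.le, hI.deriv_eq]
  refine (HasDerivAt.fun_sum fun i _ => ?_).deriv
  have hpow := ((hasDerivAt_id x).sub_const a).rpow_const (p := p i + (1 - μ))
    (Or.inl (sub_ne_zero.2 hax.ne'))
  refine (hpow.const_mul (c i * (Gamma (p i + 1) / Gamma (p i + (1 - μ) + 1)))).congr_deriv ?_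
  rw [div_eq_mul_inv, div_eq_mul_inv, inv_Gamma_eq_mul_inv_Gamma_add_one (p i - μ + 1)]
  simp only [id, show p i - μ + 1 = p i + (1 - μ) by ring,
    show p i + (1 - μ) - 1 = p i - μ by ring]
  ring

end RiemannLiouville

section Jacobi

open Polynomial

lemma descPochhammer_eval_eq_factorial_mul_choose (x : ℝ) (j : ℕ) :
    (descPochhammer ℝ j).eval x = j.factorial * Ring.choose x j := by
  rw [← descPochhammer_map (algebraMap ℤ ℝ), eval_map, ← aeval_def, aeval_eq_smeval,
    Ring.descPochhammer_eq_factorial_smul_choose, nsmul_eq_mul]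

lemma gbinom_eq_choose (x : ℝ) (j : ℕ) : gbinom x j = Ring.choose x j := by
  rw [gbinom, ← descPochhammer_eval_eq_prod_range, descPochhammer_eval_eq_factorial_mul_choose]
  field_simp

lemma descPochhammer_eval_mul_Gamma {x : ℝ} {j : ℕ} (h : (j : ℝ) < x + 1) :
    (descPochhammer ℝ j).eval x * Gamma (x + 1 - j) = Gamma (x + 1) := by
  induction j with
  | zero => simp
  | succ j ih =>
    push_cast at h
    have hxj : x - j ≠ 0 := by linarith
    rw [← ih (by linarith), descPochhammer_succ_right, eval_mul,
      show x + 1 - j = x - j + 1 by ring, Real.Gamma_add_one hxj]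
    simp only [eval_sub, eval_X, eval_natCast, Nat.cast_succ]
    ring_nf

lemma choose_eq_Gamma_div {x : ℝ} {j : ℕ} (h : (j : ℝ) < x + 1) :
    Ring.choose x j = Gamma (x + 1) / (j.factorial * Gamma (x + 1 - j)) := by
  rw [← descPochhammer_eval_mul_Gamma h, descPochhammer_eval_eq_factorial_mul_choose]
  field_simp [(Real.Gamma_pos_of_pos (sub_pos.2 h)).ne']

noncomputable def jacobiCoeff (a b : ℝ) (n k : ℕ) : ℝ :=
  (-1) ^ (n - k) * Ring.choose ((n : ℝ) + b) (n - k) * Ring.choose ((n : ℝ) + k + a + b) k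

lemma jacobiP_eq_double_sum (a b : ℝ) (n : ℕ) (x : ℝ) :
    jacobiP a b n x = ∑ r ∈ range (n + 1), ∑ t ∈ range (n + 1 - r),
      Ring.choose ((n : ℝ) + a) r * Ring.choose ((n : ℝ) + b) (n - r) * (n - r).choose t *
        (-1) ^ (n - r - t) * ((x + 1) / 2) ^ (r + t) := by
  rw [jacobiP, ← sum_range_reflect]
  refine sum_congr rfl fun r hr => ?_
  have hrn : r ≤ n := Nat.lt_succ_iff.1 (mem_range.1 hr)
  rw [Nat.add_sub_cancel, Nat.sub_sub_self hrn, show n + 1 - r = n - r + 1 by omega,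
    show (x - 1) / 2 = (x + 1) / 2 + -1 by ring, add_pow, mul_sum, sum_mul]
  refine sum_congr rfl fun t _ => ?_
  rw [gbinom_eq_choose, gbinom_eq_choose, pow_add]
  ring

lemma sum_choose_mul_choose_mul_choose (a b : ℝ) {n k : ℕ} (hk : k ≤ n) :
    ∑ r ∈ range (k + 1), Ring.choose ((n : ℝ) + a) r * Ring.choose ((n : ℝ) + b) (n - r) *
        (n - r).choose (k - r) =
      Ring.choose ((n : ℝ) + b) (n - k) * Ring.choose ((n : ℝ) + k + a + b) k := by
  have htri : ∀ r ∈ range (k + 1), Ring.choose ((n : ℝ) + b) (n - r) * (n - r).choose (k - r) =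
      Ring.choose ((n : ℝ) + b) (n - k) * Ring.choose ((k : ℝ) + b) (k - r) := by
    intro r hr
    have hrk : r ≤ k := Nat.lt_succ_iff.1 (mem_range.1 hr)
    have h := Ring.choose_smul_choose ((n : ℝ) + b) (show n - k ≤ n - r by omega)
    rw [nsmul_eq_mul, Nat.cast_sub hk, show (n : ℝ) + b - (n - k) = k + b by ring,
      show n - r - (n - k) = k - r by omega] at h
    rw [Nat.choose_symm_of_eq_add (show n - r = (k - r) + (n - k) by omega), mul_comm, h]
  have hvdm := Ring.add_choose_eq (r := (n : ℝ) + a) (s := (k : ℝ) + b) k (Commute.all _ _)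
  rw [Finset.Nat.sum_antidiagonal_eq_sum_range_succ
    (fun i j => Ring.choose ((n : ℝ) + a) i * Ring.choose ((k : ℝ) + b) j)] at hvdm
  rw [sum_congr rfl fun r hr => by rw [mul_assoc, htri r hr],
    show (n : ℝ) + k + a + b = n + a + (k + b) by ring, hvdm, mul_sum]
  exact sum_congr rfl fun r _ => by ring

lemma jacobiP_eq_sum (a b : ℝ) (n : ℕ) (x : ℝ) :
    jacobiP a b n x = ∑ k ∈ range (n + 1), jacobiCoeff a b n k * ((x + 1) / 2) ^ k := by
  rw [jacobiP_eq_double_sum, ← sum_range_diag_flip]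
  refine sum_congr rfl fun k hk => ?_
  have hkn : k ≤ n := Nat.lt_succ_iff.1 (mem_range.1 hk)
  rw [jacobiCoeff, show ∀ s B C y : ℝ, s * B * C * y = B * C * (s * y) from
    fun _ _ _ _ => by ring, ← sum_choose_mul_choose_mul_choose a b hkn, sum_mul]
  refine sum_congr rfl fun r hr => ?_
  have hrk : r ≤ k := Nat.lt_succ_iff.1 (mem_range.1 hr)
  rw [Nat.add_sub_cancel' hrk, show n - r - (k - r) = n - k by omega]
  ring

lemma one_add_rpow_mul_jacobiP_eqOn (a b : ℝ) {μ : ℝ} (hμ : 0 < μ) (n : ℕ) :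
    EqOn (fun x => (1 + x) ^ μ * jacobiP a b n x)
      (fun x => ∑ k ∈ range (n + 1), jacobiCoeff a b n k / 2 ^ k * (x - -1) ^ (μ + k))
      (Ici (-1)) := by
  intro x hx
  simp only [jacobiP_eq_sum, mul_sum]
  refine sum_congr rfl fun k _ => ?_
  rw [sub_neg_eq_add, add_comm x, Real.rpow_add_natCast' (by linarith [mem_Ici.1 hx])
    (by positivity), add_comm 1 x, div_pow]
  ring

lemma jacobiCoeff_neg_self_mul_Gamma_div {μ : ℝ} (hμ : -1 < μ) {n k : ℕ} (hk : k ≤ n) :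
    jacobiCoeff (-μ) μ n k * (Gamma (μ + k + 1) / Gamma (k + 1)) =
      Gamma (n + μ + 1) / Gamma (n + 1) * jacobiCoeff 0 0 n k := by
  have hk0 : (0 : ℝ) ≤ k := k.cast_nonneg
  have hnk : ((n - k : ℕ) : ℝ) = n - k := Nat.cast_sub hk
  simp only [jacobiCoeff, neg_add_cancel_right, add_zero]
  rw [choose_eq_Gamma_div (x := n + μ) (by rw [hnk]; linarith),
    choose_eq_Gamma_div (x := n) (by rw [hnk]; linarith), hnk,
    show (n : ℝ) + μ + 1 - (n - k) = μ + k + 1 by ring, show (n : ℝ) + 1 - (n - k) = k + 1 by ring]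
  have hΓ₁ : Gamma (μ + k + 1) ≠ 0 := (Real.Gamma_pos_of_pos (by linarith)).ne'
  have hΓ₂ : Gamma (k + 1) ≠ 0 := (Real.Gamma_pos_of_pos (by positivity)).ne'
  have hΓ₃ : Gamma (n + 1) ≠ 0 := (Real.Gamma_pos_of_pos (by positivity)).ne'
  field_simp

end Jacobi

/-- When `σ = μ`, the left RL derivative of the Jacobi poly-fractonomial of first kind
is `(Γ(n+μ)/Γ(n))` times the Legendre polynomial `P_{n-1} = P_{n-1}^{0,0}`. -/
theorem fracDeriv_polyfractonomial_legendre (μ : ℝ) (hμ0 : 0 < μ) (hμ1 : μ < 1)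
    (n : ℕ) (hn : 1 ≤ n) (ξ : ℝ) (hξ : ξ ∈ Set.Ioc (-1 : ℝ) 1) :
    RLderivL (-1) μ (fun s => (1 + s) ^ μ * jacobiP (-μ) μ (n - 1) s) ξ =
      Real.Gamma ((n : ℝ) + μ) / Real.Gamma (n : ℝ) * jacobiP 0 0 (n - 1) ξ := by
  obtain ⟨m, rfl⟩ : ∃ m, n = m + 1 := ⟨n - 1, by omega⟩
  have hp : ∀ k ∈ range (m + 1), (-1 : ℝ) < μ + k := fun k _ => by
    linarith [(k.cast_nonneg : (0 : ℝ) ≤ k)]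
  rw [Nat.add_sub_cancel, RLderivL_congr hξ.1 (one_add_rpow_mul_jacobiP_eqOn (-μ) μ hμ0 m),
    RLderivL_sum_rpow_sub _ _ _ hμ0 hμ1 hp hξ.1, jacobiP_eq_sum, mul_sum]
  refine sum_congr rfl fun k hk => ?_
  have hcoeff :=
    jacobiCoeff_neg_self_mul_Gamma_div (by linarith) (Nat.lt_succ_iff.1 (mem_range.1 hk))
  rw [show μ + k - μ = (k : ℝ) by ring, Real.rpow_natCast, sub_neg_eq_add, Nat.cast_succ,
    show (m : ℝ) + 1 + μ = m + μ + 1 by ring, div_pow]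
  linear_combination (ξ + 1) ^ k / 2 ^ k * hcoeff
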